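/- For every n ≥ 1, every balanced quantum Boolean function A ∈ M₂(ℂ)^{⊗n} satisfies ∑_{j=1}^n ‖d_j A‖₁ ≥ 1/π, i.e. Inf¹(A) ≥ 1/π. -/

import Mathlib

open Matrix
open scoped BigOperators Classical ComplexOrder

namespace QPaper

variable {ι : Type*} [Fintype ι] [DecidableEq ι]

/-- The positive semidefinite square root of a matrix (junk value `0` if the matrix is
not positive semidefinite). -/
noncomputable def psdSqrt (X : Matrix ι ι ℂ) : Matrix ι ι ℂ :=
  if h : X.PosSemidef then
    (h.1.eigenvectorUnitary : Matrix ι ι ℂ) *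
      Matrix.diagonal ((↑) ∘ Real.sqrt ∘ h.1.eigenvalues) *
      (star h.1.eigenvectorUnitary : Matrix ι ι ℂ)
  else 0

/-- The normalized trace (Schatten 1) norm `‖X‖₁ = tr |X| / card ι`. -/
noncomputable def normOne (X : Matrix ι ι ℂ) : ℝ :=
  (psdSqrt (Xᴴ * X)).trace.re / Fintype.card ι

/-- The normalized Schatten 2 norm `‖X‖₂ = (tr (X* X) / card ι)^{1/2}`. -/
noncomputable def normTwo (X : Matrix ι ι ℂ) : ℝ :=
  Real.sqrt ((Xᴴ * X).trace.re / Fintype.card ι)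

/-- The operator norm of a matrix, acting on the Euclidean space. -/
noncomputable def opNorm (X : Matrix ι ι ℂ) : ℝ :=
  ‖Matrix.toEuclideanCLM (𝕜 := ℂ) X‖

/-- The Loewner order: `X ≤ Y` iff `Y - X` is positive semidefinite. -/
def LoewnerLE (X Y : Matrix ι ι ℂ) : Prop := (Y - X).PosSemidef

/-- Configurations of `n` qubits. -/
abbrev QState (n : ℕ) := Fin n → Fin 2

/-- The algebra of `n`-qubit observables `M₂(ℂ)^{⊗ n}`. -/
abbrev Obs (n : ℕ) := Matrix (QState n) (QState n) ℂ

/-- The conditional expectation `E_S = ⊗_{j ∈ S} (½ tr)(·) 𝟏 ⊗ id` replacing each qubit in `S`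
by its normalized partial trace:  `E_S(A) = 2^{-|S|} tr_S(A) ⊗ 𝟏_S`. -/
noncomputable def ESet {n : ℕ} (S : Finset (Fin n)) (A : Obs n) : Obs n :=
  Matrix.of fun x y =>
    if ∀ j ∈ S, x j = y j then
      ((2 : ℂ) ^ n)⁻¹ *
        ∑ z : QState n,
          A (fun j => if j ∈ S then z j else x j) (fun j => if j ∈ S then z j else y j)
    else 0

/-- The derivation `d_j = 𝕀^{⊗(j-1)} ⊗ (𝕀 - ½ tr(·) 𝟏) ⊗ 𝕀^{⊗(n-j)}`. -/
noncomputable def dCoord {n : ℕ} (j : Fin n) (A : Obs n) : Obs n := A - ESet {j} A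

/-- The quantum depolarizing semigroup `P_t = (e^{-t} 𝕀 + (1 - e^{-t}) ½ tr(·) 𝟏)^{⊗ n}`. -/
noncomputable def Pt {n : ℕ} (t : ℝ) (A : Obs n) : Obs n :=
  ∑ S : Finset (Fin n),
    (Real.exp (-t) ^ (n - S.card) * (1 - Real.exp (-t)) ^ S.card) • ESet S A

/-- The generator `𝓛 = ∑_j d_j`. -/
noncomputable def Lgen {n : ℕ} (A : Obs n) : Obs n := ∑ j : Fin n, dCoord j A

/-- The carré du champ `Γ(A) = ½ (𝓛(A*) A + A* 𝓛(A) - 𝓛(A* A))`. -/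
noncomputable def carre {n : ℕ} (A : Obs n) : Obs n :=
  (2 : ℂ)⁻¹ • (Lgen Aᴴ * A + Aᴴ * Lgen A - Lgen (Aᴴ * A))

/-- The total `L¹`-influence `Inf¹(A) = ∑_j ‖d_j A‖₁`. -/
noncomputable def inf1 {n : ℕ} (A : Obs n) : ℝ := ∑ j : Fin n, normOne (dCoord j A)

/-- The total `L²`-influence `Inf²(A) = ∑_j ‖d_j A‖₂²`. -/
noncomputable def inf2 {n : ℕ} (A : Obs n) : ℝ := ∑ j : Fin n, normTwo (dCoord j A) ^ 2

/-- The mean part `2^{-n} tr(A) 𝟏`. -/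
noncomputable def meanPart {n : ℕ} (A : Obs n) : Obs n :=
  (A.trace / (2 : ℂ) ^ n) • (1 : Obs n)

/-- The variance `Var(A) = ‖A - 2^{-n} tr(A) 𝟏‖₂²`. -/
noncomputable def Var {n : ℕ} (A : Obs n) : ℝ := normTwo (A - meanPart A) ^ 2



/-! ### Auxiliary development -/

section Aux
variable {n : ℕ}

lemma card_QState : Fintype.card (QState n) = 2 ^ n := by simp

lemma twoPowC_ne : ((2:ℂ) ^ n) ≠ 0 := by positivity

lemma ofReal_nonneg' {r : ℝ} (h : 0 ≤ r) : (0:ℂ) ≤ (r:ℂ) := by exact_mod_cast h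

lemma invTwoPow_nonneg : (0:ℂ) ≤ ((2:ℂ)^n)⁻¹ := by
  have : ((2:ℂ)^n)⁻¹ = ((((2:ℝ)^n)⁻¹ : ℝ) : ℂ) := by push_cast; ring
  rw [this]
  exact ofReal_nonneg' (by positivity)

/-- merge: take values of `z` on `S`, of `x` off `S`. -/
def mrg (S : Finset (Fin n)) (z x : QState n) : QState n :=
  fun j => if j ∈ S then z j else x j

lemma mrg_mrg_cancel (T : Finset (Fin n)) (a b : QState n) :
    mrg T (mrg T a b) (mrg T b a) = a := by
  funext j
  by_cases h : j ∈ T <;> simp [mrg, h]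

lemma ESet_apply (S : Finset (Fin n)) (A : Obs n) (x y : QState n) :
    ESet S A x y = if ∀ j ∈ S, x j = y j then
      ((2:ℂ)^n)⁻¹ * ∑ z : QState n, A (mrg S z x) (mrg S z y) else 0 := rfl

lemma ESet_sub (S : Finset (Fin n)) (A B : Obs n) :
    ESet S (A - B) = ESet S A - ESet S B := by
  ext x y
  simp only [ESet_apply, Matrix.sub_apply]
  split_ifs with h
  · rw [Finset.sum_sub_distrib, mul_sub]
  · simp

lemma ESet_add (S : Finset (Fin n)) (A B : Obs n) :
    ESet S (A + B) = ESet S A + ESet S B := by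
  ext x y
  simp only [ESet_apply, Matrix.add_apply]
  split_ifs with h
  · rw [Finset.sum_add_distrib, mul_add]
  · simp

lemma ESet_conjTranspose (S : Finset (Fin n)) (A : Obs n) :
    (ESet S A)ᴴ = ESet S Aᴴ := by
  ext x y
  simp only [conjTranspose_apply, ESet_apply]
  by_cases h : ∀ j ∈ S, x j = y j
  · rw [if_pos (fun j hj => (h j hj).symm), if_pos h]
    rw [star_mul', star_sum]
    simp [conjTranspose_apply]
  · rw [if_neg (fun hk => h fun j hj => (hk j hj).symm), if_neg h, star_zero]

lemma ESet_one (S : Finset (Fin n)) : ESet S (1 : Obs n) = 1 := by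
  ext x y
  rw [ESet_apply]
  by_cases h : ∀ j ∈ S, x j = y j
  · rw [if_pos h]
    by_cases hxy : x = y
    · subst hxy
      simp only [Matrix.one_apply_eq]
      rw [Finset.sum_const, Finset.card_univ, card_QState, nsmul_eq_mul]
      push_cast
      rw [mul_one, inv_mul_cancel₀ twoPowC_ne]
    · have : ∀ z : QState n, (1 : Obs n) (mrg S z x) (mrg S z y) = 0 := by
        intro z
        apply Matrix.one_apply_ne
        intro hc
        apply hxy
        funext j
        by_cases hj : j ∈ S
        · exact h j hj
        · have := congrFun hc j
          simpa [mrg, hj] using this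
      simp [this, Matrix.one_apply_ne hxy]
  · rw [if_neg h]
    have hxy : x ≠ y := fun hc => h (fun j _ => by rw [hc])
    rw [Matrix.one_apply_ne hxy]

lemma ESet_empty (A : Obs n) : ESet (∅ : Finset (Fin n)) A = A := by
  ext x y
  rw [ESet_apply, if_pos (by simp)]
  have h1 : ∀ z : QState n, mrg (∅ : Finset (Fin n)) z x = x := fun z => funext fun j => by
    simp [mrg]
  have h2 : ∀ z : QState n, mrg (∅ : Finset (Fin n)) z y = y := fun z => funext fun j => by
    simp [mrg]
  simp only [h1, h2]
  rw [Finset.sum_const, Finset.card_univ, card_QState, nsmul_eq_mul]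
  push_cast
  rw [← mul_assoc, inv_mul_cancel₀ twoPowC_ne, one_mul]

lemma ESet_univ_trace_zero (A : Obs n) (h : A.trace = 0) :
    ESet (Finset.univ : Finset (Fin n)) A = 0 := by
  ext x y
  rw [ESet_apply]
  split_ifs with hc
  · have hxy : x = y := funext fun j => hc j (Finset.mem_univ j)
    subst hxy
    have h1 : ∀ z : QState n, mrg Finset.univ z x = z := fun z => funext fun j => by
      simp [mrg]
    simp only [h1]
    have h2 : ∑ z : QState n, A z z = A.trace := by rw [Matrix.trace]; rfl
    rw [h2, h, mul_zero]
    rfl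
  · rfl

lemma sum_mrg_mrg (T : Finset (Fin n)) (f : QState n → ℂ) :
    ∑ z : QState n, ∑ w : QState n, f (mrg T w z) = (2:ℂ)^n * ∑ u : QState n, f u := by
  classical
  have key : ∑ p : QState n × QState n, f (mrg T p.2 p.1)
      = ∑ p : QState n × QState n, f p.1 :=
    Finset.sum_nbij' (fun p => (mrg T p.2 p.1, mrg T p.1 p.2))
      (fun p => (mrg T p.2 p.1, mrg T p.1 p.2))
      (fun p _ => Finset.mem_univ _) (fun p _ => Finset.mem_univ _)
      (fun p _ => by simp [mrg_mrg_cancel]) (fun p _ => by simp [mrg_mrg_cancel])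
      (fun p _ => rfl)
  have h1 : ∑ p : QState n × QState n, f (mrg T p.2 p.1)
      = ∑ z : QState n, ∑ w : QState n, f (mrg T w z) := by
    rw [← Finset.univ_product_univ, Finset.sum_product]
  have h2 : ∑ p : QState n × QState n, f p.1
      = ∑ z : QState n, ∑ _w : QState n, f z := by
    rw [← Finset.univ_product_univ, Finset.sum_product]
  rw [← h1, key, h2]
  simp only [Finset.sum_const, Finset.card_univ, card_QState, nsmul_eq_mul]
  rw [← Finset.mul_sum]
  push_cast
  ring

lemma ESet_comp (S T : Finset (Fin n)) (A : Obs n) :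
    ESet S (ESet T A) = ESet (S ∪ T) A := by
  ext x y
  rw [ESet_apply, ESet_apply]
  by_cases hst : ∀ j ∈ S ∪ T, x j = y j
  · have hs : ∀ j ∈ S, x j = y j := fun j hj => hst j (Finset.mem_union_left _ hj)
    rw [if_pos hs, if_pos hst]
    have hinner : ∀ z : QState n, ESet T A (mrg S z x) (mrg S z y)
        = ((2:ℂ)^n)⁻¹ * ∑ w : QState n,
            A (mrg (S ∪ T) (mrg T w z) x) (mrg (S ∪ T) (mrg T w z) y) := by
      intro z
      rw [ESet_apply, if_pos ?side]
      case side =>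
        intro j hj
        by_cases h2 : j ∈ S
        · simp [mrg, h2]
        · show mrg S z x j = mrg S z y j
          rw [show mrg S z x j = x j from if_neg h2, show mrg S z y j = y j from if_neg h2]
          exact hst j (Finset.mem_union_right _ hj)
      · congr 1
        apply Finset.sum_congr rfl
        intro w _
        congr 1 <;>
          (funext j; by_cases h1 : j ∈ T <;> by_cases h2 : j ∈ S <;>
            simp [mrg, h1, h2])
    rw [Finset.sum_congr rfl fun z _ => hinner z, ← Finset.mul_sum,
      sum_mrg_mrg T (fun u => A (mrg (S ∪ T) u x) (mrg (S ∪ T) u y))]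
    rw [← mul_assoc, ← mul_assoc, mul_comm (((2:ℂ)^n)⁻¹) (((2:ℂ)^n)⁻¹)]
    rw [mul_assoc (((2:ℂ)^n)⁻¹), inv_mul_cancel₀ twoPowC_ne, mul_one]
  · rw [if_neg hst]
    by_cases hs : ∀ j ∈ S, x j = y j
    · rw [if_pos hs]
      have hz : ∀ z : QState n, ESet T A (mrg S z x) (mrg S z y) = 0 := by
        intro z
        rw [ESet_apply, if_neg]
        intro hT
        apply hst
        intro j hj
        rcases Finset.mem_union.mp hj with h | h
        · exact hs j h
        · by_cases h2 : j ∈ S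
          · exact hs j h2
          · have := hT j h
            simpa [mrg, h2] using this
      simp [hz]
    · rw [if_neg hs]

lemma trace_conjTranspose_mul (X Y : Obs n) :
    (Xᴴ * Y).trace = ∑ x : QState n, ∑ y : QState n, star (X y x) * Y y x := by
  simp only [Matrix.trace, Matrix.diag, Matrix.mul_apply, Matrix.conjTranspose_apply]

lemma sum_triple (f : QState n → QState n → QState n → ℂ) :
    ∑ p : (QState n × QState n) × QState n, f p.1.1 p.1.2 p.2
      = ∑ a : QState n, ∑ b : QState n, ∑ z : QState n, f a b z := by
  rw [← Finset.univ_product_univ, Finset.sum_product]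
  rw [← Finset.univ_product_univ, Finset.sum_product]

lemma sum_t3 {α β γ : Type*} [Fintype α] [Fintype β] [Fintype γ]
    (f : α → β → γ → ℂ) :
    ∑ p : α × β × γ, f p.1 p.2.1 p.2.2 = ∑ a : α, ∑ b : β, ∑ c : γ, f a b c := by
  rw [← Finset.univ_product_univ, Finset.sum_product]
  exact Finset.sum_congr rfl fun a _ => by
    rw [← Finset.univ_product_univ, Finset.sum_product]

lemma ESet_adjoint (S : Finset (Fin n)) (X Y : Obs n) :
    ((ESet S X)ᴴ * Y).trace = (Xᴴ * ESet S Y).trace := by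
  classical
  rw [trace_conjTranspose_mul, trace_conjTranspose_mul, Finset.sum_comm]
  conv_rhs => rw [Finset.sum_comm]
  have L : ∀ a b : QState n, star (ESet S X a b) * Y a b
      = ((2:ℂ)^n)⁻¹ * ∑ z : QState n,
          (if ∀ j ∈ S, a j = b j then star (X (mrg S z a) (mrg S z b)) * Y a b else 0) := by
    intro a b
    rw [ESet_apply]
    split_ifs with h
    · rw [star_mul', star_sum]
      have hc : star (((2:ℂ)^n)⁻¹) = ((2:ℂ)^n)⁻¹ := by simp
      rw [hc, mul_assoc, Finset.sum_mul]
    · simp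
  have R : ∀ a b : QState n, star (X a b) * ESet S Y a b
      = ((2:ℂ)^n)⁻¹ * ∑ z : QState n,
          (if ∀ j ∈ S, a j = b j then star (X a b) * Y (mrg S z a) (mrg S z b) else 0) := by
    intro a b
    rw [ESet_apply]
    split_ifs with h
    · rw [mul_left_comm, Finset.mul_sum]
    · simp
  simp only [L, R, ← Finset.mul_sum]
  congr 1
  calc ∑ a : QState n, ∑ b : QState n, ∑ z : QState n,
        (if ∀ j ∈ S, a j = b j then star (X (mrg S z a) (mrg S z b)) * Y a b else 0)
      = ∑ p : (QState n × QState n) × QState n,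
          (if ∀ j ∈ S, p.1.1 j = p.1.2 j then
            star (X (mrg S p.2 p.1.1) (mrg S p.2 p.1.2)) * Y p.1.1 p.1.2 else 0) :=
        (sum_triple _).symm
    _ = ∑ p ∈ Finset.univ.filter
          (fun p : (QState n × QState n) × QState n => ∀ j ∈ S, p.1.1 j = p.1.2 j),
          star (X (mrg S p.2 p.1.1) (mrg S p.2 p.1.2)) * Y p.1.1 p.1.2 :=
        (Finset.sum_filter _ _).symm
    _ = ∑ p ∈ Finset.univ.filter
          (fun p : (QState n × QState n) × QState n => ∀ j ∈ S, p.1.1 j = p.1.2 j),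
          star (X p.1.1 p.1.2) * Y (mrg S p.2 p.1.1) (mrg S p.2 p.1.2) := by
        apply Finset.sum_nbij'
          (i := fun p => ((mrg S p.2 p.1.1, mrg S p.2 p.1.2), mrg S p.1.1 p.2))
          (j := fun p => ((mrg S p.2 p.1.1, mrg S p.2 p.1.2), mrg S p.1.1 p.2))
        · intro p hp
          simp only [Finset.mem_filter, Finset.mem_univ, true_and]
          intro j hj
          simp [mrg, hj]
        · intro p hp
          simp only [Finset.mem_filter, Finset.mem_univ, true_and]
          intro j hj
          simp [mrg, hj]
        · intro p hp
          have hcond : ∀ j ∈ S, p.1.1 j = p.1.2 j :=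
            (Finset.mem_filter.mp hp).2
          obtain ⟨⟨a, b⟩, z⟩ := p
          simp only at hcond ⊢
          refine Prod.ext (Prod.ext ?_ ?_) ?_
          · exact mrg_mrg_cancel S a z
          · funext j
            by_cases hj : j ∈ S
            · simp [mrg, hj, hcond j hj]
            · simp [mrg, hj]
          · exact mrg_mrg_cancel S z a
        · intro p hp
          have hcond : ∀ j ∈ S, p.1.1 j = p.1.2 j :=
            (Finset.mem_filter.mp hp).2
          obtain ⟨⟨a, b⟩, z⟩ := p
          simp only at hcond ⊢
          refine Prod.ext (Prod.ext ?_ ?_) ?_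
          · exact mrg_mrg_cancel S a z
          · funext j
            by_cases hj : j ∈ S
            · simp [mrg, hj, hcond j hj]
            · simp [mrg, hj]
          · exact mrg_mrg_cancel S z a
        · intro p hp
          have hcond : ∀ j ∈ S, p.1.1 j = p.1.2 j :=
            (Finset.mem_filter.mp hp).2
          obtain ⟨⟨a, b⟩, z⟩ := p
          simp only at hcond ⊢
          have h2 : mrg S (mrg S a z) (mrg S z b) = b := by
            funext j
            by_cases hj : j ∈ S
            · simp [mrg, hj, hcond j hj]
            · simp [mrg, hj]
          rw [mrg_mrg_cancel S a z, h2]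
    _ = ∑ p : (QState n × QState n) × QState n,
          (if ∀ j ∈ S, p.1.1 j = p.1.2 j then
            star (X p.1.1 p.1.2) * Y (mrg S p.2 p.1.1) (mrg S p.2 p.1.2) else 0) :=
        Finset.sum_filter _ _
    _ = ∑ a : QState n, ∑ b : QState n, ∑ z : QState n,
        (if ∀ j ∈ S, a j = b j then star (X a b) * Y (mrg S z a) (mrg S z b) else 0) :=
        sum_triple (fun a b z =>
          if ∀ j ∈ S, a j = b j then star (X a b) * Y (mrg S z a) (mrg S z b) else 0)

lemma ESet_posSemidef (j : Fin n) {A : Obs n} (hA : A.PosSemidef) :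
    (ESet {j} A).PosSemidef := by
  classical
  refine posSemidef_iff_dotProduct_mulVec.mpr ⟨?_, ?_⟩
  · show (ESet {j} A)ᴴ = ESet {j} A
    rw [ESet_conjTranspose, hA.1.eq]
  · intro v
    have key : ∀ x y : QState n, star (v x) * (ESet {j} A x y * v y)
        = ((2:ℂ)^n)⁻¹ * ∑ z : QState n,
            (if ∀ i ∈ ({j} : Finset (Fin n)), x i = y i
              then star (v x) * (A (mrg {j} z x) (mrg {j} z y) * v y) else 0) := by
      intro x y
      rw [ESet_apply]
      split_ifs with h
      · rw [mul_assoc, Finset.sum_mul, mul_left_comm, Finset.mul_sum]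
      · simp
    have e1 : star v ⬝ᵥ (ESet {j} A *ᵥ v)
        = ∑ x : QState n, ∑ y : QState n, star (v x) * (ESet {j} A x y * v y) := by
      simp only [dotProduct, Matrix.mulVec, Pi.star_apply, Finset.mul_sum]
    rw [e1]
    simp only [key, ← Finset.mul_sum]
    have swap : ∑ x : QState n, ∑ y : QState n, ∑ z : QState n,
          (if ∀ i ∈ ({j} : Finset (Fin n)), x i = y i
            then star (v x) * (A (mrg {j} z x) (mrg {j} z y) * v y) else 0)
        = ∑ z : QState n, ∑ x : QState n, ∑ y : QState n,
          (if ∀ i ∈ ({j} : Finset (Fin n)), x i = y i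
            then star (v x) * (A (mrg {j} z x) (mrg {j} z y) * v y) else 0) := by
      rw [Finset.sum_congr rfl fun x _ => Finset.sum_comm]
      exact Finset.sum_comm
    rw [swap]
    apply mul_nonneg invTwoPow_nonneg
    apply Finset.sum_nonneg
    intro z _
    set w : Fin 2 → (QState n → ℂ) := fun c u =>
      if u j = z j then v (mrg {j} (fun _ => c) u) else 0 with hw
    have hsum : ∑ x : QState n, ∑ y : QState n,
          (if ∀ i ∈ ({j} : Finset (Fin n)), x i = y i
            then star (v x) * (A (mrg {j} z x) (mrg {j} z y) * v y) else 0)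
        = ∑ c : Fin 2, star (w c) ⬝ᵥ (A *ᵥ (w c)) := by
      have e2 : ∀ c : Fin 2, star (w c) ⬝ᵥ (A *ᵥ (w c))
          = ∑ u : QState n, ∑ u' : QState n,
            (if u j = z j ∧ u' j = z j
              then star (v (mrg {j} (fun _ => c) u)) * (A u u' * v (mrg {j} (fun _ => c) u'))
              else 0) := by
        intro c
        simp only [dotProduct, Matrix.mulVec, Pi.star_apply, Finset.mul_sum, hw]
        apply Finset.sum_congr rfl
        intro u _
        apply Finset.sum_congr rfl
        intro u' _
        by_cases h1 : u j = z j <;> by_cases h2 : u' j = z j <;>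
          simp [h1, h2]
      simp only [e2]
      calc ∑ x : QState n, ∑ y : QState n,
            (if ∀ i ∈ ({j} : Finset (Fin n)), x i = y i
              then star (v x) * (A (mrg {j} z x) (mrg {j} z y) * v y) else 0)
          = ∑ p : QState n × QState n,
            (if ∀ i ∈ ({j} : Finset (Fin n)), p.1 i = p.2 i
              then star (v p.1) * (A (mrg {j} z p.1) (mrg {j} z p.2) * v p.2) else 0) := by
            rw [← Finset.univ_product_univ, Finset.sum_product]
        _ = ∑ p ∈ Finset.univ.filter
              (fun p : QState n × QState n => ∀ i ∈ ({j} : Finset (Fin n)), p.1 i = p.2 i),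
              star (v p.1) * (A (mrg {j} z p.1) (mrg {j} z p.2) * v p.2) :=
            (Finset.sum_filter _ _).symm
        _ = ∑ q ∈ Finset.univ.filter
              (fun q : Fin 2 × QState n × QState n => q.2.1 j = z j ∧ q.2.2 j = z j),
              star (v (mrg {j} (fun _ => q.1) q.2.1)) *
                (A q.2.1 q.2.2 * v (mrg {j} (fun _ => q.1) q.2.2)) := by
            apply Finset.sum_nbij'
              (i := fun p => (p.1 j, mrg {j} z p.1, mrg {j} z p.2))
              (j := fun q => (mrg {j} (fun _ => q.1) q.2.1, mrg {j} (fun _ => q.1) q.2.2))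
            · intro p hp
              simp only [Finset.mem_filter, Finset.mem_univ, true_and]
              constructor <;> simp [mrg]
            · intro q hq
              simp only [Finset.mem_filter, Finset.mem_univ, true_and]
              intro i hi
              rw [Finset.mem_singleton] at hi
              subst hi
              simp [mrg]
            · intro p hp
              have hcond := (Finset.mem_filter.mp hp).2
              obtain ⟨a, b⟩ := p
              have hab : a j = b j := hcond j (Finset.mem_singleton_self j)
              refine Prod.ext ?_ ?_
              · funext i
                by_cases hi : i = j
                · subst hi; simp [mrg]
                · simp [mrg, hi]
              · funext i
                by_cases hi : i = j
                · subst hi; simp [mrg, hab]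
                · simp [mrg, hi]
            · intro q hq
              have hcond := (Finset.mem_filter.mp hq).2
              obtain ⟨c, u, u'⟩ := q
              obtain ⟨h1, h2⟩ := hcond
              simp only at h1 h2 ⊢
              refine Prod.ext ?_ (Prod.ext ?_ ?_)
              · simp [mrg]
              · funext i
                by_cases hi : i = j
                · subst hi; simp [mrg, h1.symm]
                · simp [mrg, hi]
              · funext i
                by_cases hi : i = j
                · subst hi; simp [mrg, h2.symm]
                · simp [mrg, hi]
            · intro p hp
              have hcond := (Finset.mem_filter.mp hp).2
              obtain ⟨a, b⟩ := p
              have hab : a j = b j := hcond j (Finset.mem_singleton_self j)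
              have ea : mrg {j} (fun _ => a j) (mrg {j} z a) = a := by
                funext i
                by_cases hi : i = j
                · subst hi; simp [mrg]
                · simp [mrg, hi]
              have eb : mrg {j} (fun _ => a j) (mrg {j} z b) = b := by
                funext i
                by_cases hi : i = j
                · subst hi; simp [mrg, hab]
                · simp [mrg, hi]
              show star (v a) * (A (mrg {j} z a) (mrg {j} z b) * v b)
                  = star (v (mrg {j} (fun _ => a j) (mrg {j} z a))) *
                    (A (mrg {j} z a) (mrg {j} z b) * v (mrg {j} (fun _ => a j) (mrg {j} z b)))
              rw [ea, eb]
        _ = ∑ c : Fin 2, ∑ u : QState n, ∑ u' : QState n,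
              (if u j = z j ∧ u' j = z j
                then star (v (mrg {j} (fun _ => c) u)) * (A u u' * v (mrg {j} (fun _ => c) u'))
                else 0) := by
            rw [Finset.sum_filter]
            exact sum_t3 (fun c u u' =>
              if u j = z j ∧ u' j = z j
                then star (v (mrg {j} (fun _ => c) u)) * (A u u' * v (mrg {j} (fun _ => c) u'))
                else 0)
    rw [hsum]
    apply Finset.sum_nonneg
    intro c _
    exact hA.dotProduct_mulVec_nonneg (w c)

/-! ### Part I: comparing Schatten 1 and 2 norms -/

/-- A Hermitian matrix whose square is `2•itself` is PSD. -/
lemma psd_aux {B : Obs n} (hB : Bᴴ = B) (hsq : B * B = (2:ℂ) • B) : B.PosSemidef := by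
  refine posSemidef_iff_dotProduct_mulVec.mpr ⟨?_, ?_⟩
  · exact hB
  · intro v
    have h := (Matrix.posSemidef_conjTranspose_mul_self B).dotProduct_mulVec_nonneg v
    have e : (2:ℂ)⁻¹ • (Bᴴ * B) = B := by
      rw [hB, hsq, smul_smul]
      norm_num
    have e2 : star v ⬝ᵥ (B *ᵥ v) = (2:ℂ)⁻¹ * (star v ⬝ᵥ ((Bᴴ * B) *ᵥ v)) := by
      conv_lhs => rw [← e]
      rw [Matrix.smul_mulVec, dotProduct_smul, smul_eq_mul]
    rw [e2]
    refine mul_nonneg ?_ h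
    have h2 : (0:ℝ) ≤ ((2:ℝ))⁻¹ := by norm_num
    have := ofReal_nonneg' h2
    rwa [show ((((2:ℝ))⁻¹ : ℝ) : ℂ) = ((2:ℂ))⁻¹ by push_cast; ring] at this

lemma eig_abs_le (c : ℝ) (X : Obs n) (hX : X.IsHermitian)
    (h1 : ((c:ℂ) • 1 - X).PosSemidef) (h2 : ((c:ℂ) • 1 + X).PosSemidef) (i : QState n) :
    |hX.eigenvalues i| ≤ c := by
  classical
  set v : QState n → ℂ := ⇑(hX.eigenvectorBasis i) with hv
  have hnorm : star v ⬝ᵥ v = 1 := by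
    have h := hX.eigenvectorBasis.orthonormal.1 i
    have := @inner_self_eq_norm_sq_to_K ℂ _ _ _ _ (hX.eigenvectorBasis i)
    rw [h] at this
    rw [hv]
    rw [EuclideanSpace.inner_eq_star_dotProduct, dotProduct_comm] at this
    simpa using this
  have hev : X *ᵥ v = (hX.eigenvalues i : ℂ) • v := by
    have := hX.mulVec_eigenvectorBasis i
    rw [RCLike.real_smul_eq_coe_smul (K := ℂ)] at this
    exact this
  have key1 : star v ⬝ᵥ (((c:ℂ) • 1 - X) *ᵥ v) = ((c - hX.eigenvalues i : ℝ) : ℂ) := by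
    rw [Matrix.sub_mulVec, dotProduct_sub, Matrix.smul_mulVec, Matrix.one_mulVec,
      dotProduct_smul, hev, dotProduct_smul, hnorm]
    push_cast [smul_eq_mul]
    ring
  have key2 : star v ⬝ᵥ (((c:ℂ) • 1 + X) *ᵥ v) = ((c + hX.eigenvalues i : ℝ) : ℂ) := by
    rw [Matrix.add_mulVec, dotProduct_add, Matrix.smul_mulVec, Matrix.one_mulVec,
      dotProduct_smul, hev, dotProduct_smul, hnorm]
    push_cast [smul_eq_mul]
    ring
  have b1 := h1.dotProduct_mulVec_nonneg v
  have b2 := h2.dotProduct_mulVec_nonneg v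
  rw [key1] at b1
  rw [key2] at b2
  have r1 : 0 ≤ c - hX.eigenvalues i := by exact_mod_cast b1
  have r2 : 0 ≤ c + hX.eigenvalues i := by exact_mod_cast b2
  rw [abs_le]
  constructor <;> linarith

lemma trace_sq_le (c : ℝ) (X : Obs n) (hXh : Xᴴ = X)
    (h1 : ((c:ℂ) • 1 - X).PosSemidef) (h2 : ((c:ℂ) • 1 + X).PosSemidef) :
    ((Xᴴ * X).trace).re ≤ c * ((psdSqrt (Xᴴ * X)).trace).re := by
  classical
  have hX : X.IsHermitian := hXh
  set μ := hX.eigenvalues with hμ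
  set U : Obs n := (hX.eigenvectorUnitary : Obs n) with hU
  have hUU : star U * U = 1 := by
    exact Matrix.mem_unitaryGroup_iff'.mp hX.eigenvectorUnitary.2
  have hcancel : ∀ M : Obs n, star U * (U * M) = M := fun M => by
    rw [← Matrix.mul_assoc, hUU, Matrix.one_mul]
  have hspec := hX.spectral_theorem
  have hdd : ∀ d e : QState n → ℂ,
      (U * diagonal d * star U) * (U * diagonal e * star U)
        = U * diagonal (fun i => d i * e i) * star U := by
    intro d e
    calc (U * diagonal d * star U) * (U * diagonal e * star U)
        = U * (diagonal d * (star U * (U * (diagonal e * star U)))) := by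
          simp only [Matrix.mul_assoc]
      _ = U * (diagonal d * (diagonal e * star U)) := by rw [hcancel]
      _ = U * diagonal (fun i => d i * e i) * star U := by
          rw [← Matrix.mul_assoc (diagonal d) (diagonal e) (star U),
            Matrix.diagonal_mul_diagonal, ← Matrix.mul_assoc]
  have htr : ∀ d : QState n → ℂ, (U * diagonal d * star U).trace = ∑ i, d i := by
    intro d
    rw [Matrix.trace_mul_cycle, hUU, Matrix.one_mul, Matrix.trace_diagonal]
  have hXX : Xᴴ * X = U * diagonal (fun i => ((μ i : ℝ) : ℂ) * ((μ i : ℝ) : ℂ)) * star U := by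
    conv_lhs => rw [hXh, hspec]
    exact hdd _ _
  have habs : Xᴴ * X = (U * diagonal (fun i => ((|μ i| : ℝ) : ℂ)) * star U) ^ 2 := by
    rw [pow_two, hdd, hXX]
    have hfun : (fun i : QState n => ((|μ i| : ℝ) : ℂ) * ((|μ i| : ℝ) : ℂ))
        = fun i : QState n => ((μ i : ℝ) : ℂ) * ((μ i : ℝ) : ℂ) := by
      funext i
      rw [← Complex.ofReal_mul, ← Complex.ofReal_mul, abs_mul_abs_self]
    rw [hfun]
  have hTpsd : (U * diagonal (fun i => ((|μ i| : ℝ) : ℂ)) * star U).PosSemidef := by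
    have hd : Matrix.PosSemidef (diagonal (fun i : QState n => ((|μ i| : ℝ) : ℂ))) := by
      apply Matrix.PosSemidef.diagonal
      intro i
      exact ofReal_nonneg' (abs_nonneg _)
    have := hd.mul_mul_conjTranspose_same U
    rwa [← Matrix.star_eq_conjTranspose] at this
  have hpsd : (Xᴴ * X).PosSemidef := Matrix.posSemidef_conjTranspose_mul_self X
  have hsqrt : psdSqrt (Xᴴ * X) = U * diagonal (fun i => ((|μ i| : ℝ) : ℂ)) * star U := by
    rw [psdSqrt, dif_pos hpsd]
    have ea : hpsd.1.cfc Real.sqrt = cfc Real.sqrt (Xᴴ * X) := (hpsd.1.cfc_eq _).symm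
    have eb : hX.cfc (fun x => |x|) = U * diagonal (fun i => ((|μ i| : ℝ) : ℂ)) * star U := rfl
    have ec : Xᴴ * X = cfc (fun x : ℝ => x ^ 2) X := by
      rw [cfc_pow_id X 2 hX.isSelfAdjoint, hXh, pow_two]
    show hpsd.1.cfc Real.sqrt = _
    rw [ea, ← eb, ← hX.cfc_eq, ec, ← cfc_comp Real.sqrt (fun x => x ^ 2) X hX.isSelfAdjoint]
    congr 1
    funext x
    exact Real.sqrt_sq_eq_abs x
  have hb : ∀ i, |μ i| ≤ c := eig_abs_le c X hX h1 h2
  rw [hsqrt, hXX, htr, htr]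
  have e1 : (∑ i : QState n, ((μ i : ℝ) : ℂ) * ((μ i : ℝ) : ℂ))
      = (((∑ i : QState n, μ i * μ i : ℝ)) : ℂ) := by push_cast; ring
  have e2 : (∑ i : QState n, ((|μ i| : ℝ) : ℂ)) = (((∑ i : QState n, |μ i| : ℝ)) : ℂ) := by
    push_cast; ring
  rw [e1, e2, Complex.ofReal_re, Complex.ofReal_re, Finset.mul_sum]
  apply Finset.sum_le_sum
  intro i _
  calc μ i * μ i = |μ i| * |μ i| := (abs_mul_abs_self _).symm
    _ ≤ c * |μ i| := mul_le_mul_of_nonneg_right (hb i) (abs_nonneg _)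

/-! ### Part II: Poincare inequality via martingale decomposition -/

lemma trace_star (X Y : Obs n) : (Xᴴ * Y).trace = star ((Yᴴ * X).trace) := by
  have h := Matrix.trace_conjTranspose (Yᴴ * X)
  rw [Matrix.conjTranspose_mul, Matrix.conjTranspose_conjTranspose] at h
  exact h

lemma ip_self_re_nonneg (X : Obs n) : 0 ≤ ((Xᴴ * X).trace).re := by
  rw [trace_conjTranspose_mul, Complex.re_sum]
  apply Finset.sum_nonneg
  intro x _
  rw [Complex.re_sum]
  apply Finset.sum_nonneg
  intro y _
  have h : star (X y x) * X y x = ((Complex.normSq (X y x) : ℝ) : ℂ) := by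
    rw [mul_comm]
    exact Complex.mul_conj _
  rw [h, Complex.ofReal_re]
  exact Complex.normSq_nonneg _

lemma ESet_contract (S : Finset (Fin n)) (X : Obs n) :
    (((ESet S X)ᴴ * ESet S X).trace).re ≤ ((Xᴴ * X).trace).re := by
  have hEE : ((ESet S X)ᴴ * ESet S X).trace = (Xᴴ * ESet S X).trace := by
    rw [ESet_adjoint, ESet_comp, Finset.union_self]
  have h1 : ((ESet S X)ᴴ * X).trace = star ((Xᴴ * ESet S X).trace) := trace_star _ _
  have hpos := ip_self_re_nonneg (X - ESet S X)
  have hexp : ((X - ESet S X)ᴴ * (X - ESet S X)).trace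
      = (Xᴴ * X).trace - (Xᴴ * ESet S X).trace
        - ((ESet S X)ᴴ * X).trace + ((ESet S X)ᴴ * ESet S X).trace := by
    rw [Matrix.conjTranspose_sub, Matrix.sub_mul, Matrix.mul_sub, Matrix.mul_sub,
      Matrix.trace_sub, Matrix.trace_sub, Matrix.trace_sub]
    ring
  rw [hexp, hEE, h1] at hpos
  simp only [Complex.sub_re, Complex.add_re, Complex.conj_re, RCLike.star_def] at hpos
  have hre := congrArg Complex.re hEE
  linarith [hre]

lemma sum_dCoord_ge (A : Obs n) (hbal : A.trace = 0) :
    ((Aᴴ * A).trace).re ≤ ∑ j : Fin n, (((dCoord j A)ᴴ * (dCoord j A)).trace).re := by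
  classical
  set Sk : ℕ → Finset (Fin n) := fun k => Finset.univ.filter (fun j => (j:ℕ) < k) with hSk
  set f : ℕ → Obs n := fun k => ESet (Sk k) A with hf
  set D : ℕ → Obs n := fun k => f k - f (k+1) with hD
  have hsub : ∀ {a b : ℕ}, a ≤ b → Sk a ⊆ Sk b := by
    intro a b hab
    intro i hi
    simp only [hSk, Finset.mem_filter, Finset.mem_univ, true_and] at hi ⊢
    omega
  have hs0 : Sk 0 = ∅ := by
    ext i
    simp [hSk]
  have hsn : Sk n = Finset.univ := by
    ext i
    simp only [hSk, Finset.mem_filter, Finset.mem_univ, true_and, iff_true]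
    exact i.isLt
  have hf0 : f 0 = A := by
    rw [hf]
    simp only [hs0]
    exact ESet_empty A
  have hfn : f n = 0 := by
    rw [hf]
    simp only [hsn]
    exact ESet_univ_trace_zero A hbal
  have htele : ∑ k ∈ Finset.range n, D k = A := by
    have h := Finset.sum_range_sub' f n
    simp only [hD]
    rw [h, hf0, hfn, sub_zero]
  have hzero : ∀ m k : ℕ, k < m → ESet (Sk m) (D k) = 0 := by
    intro m k hkm
    simp only [hD, hf]
    rw [ESet_sub, ESet_comp, ESet_comp,
      Finset.union_eq_left.mpr (hsub (le_of_lt hkm)),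
      Finset.union_eq_left.mpr (hsub hkm),
      sub_self]
  have horth : ∀ k l : ℕ, k < l → ((D k)ᴴ * D l).trace = 0 := by
    intro k l hkl
    have e2 : ∀ m : ℕ, k < m → ((D k)ᴴ * ESet (Sk m) A).trace = 0 := by
      intro m hm
      rw [← ESet_adjoint, hzero m k hm, Matrix.conjTranspose_zero, Matrix.zero_mul,
        Matrix.trace_zero]
    have e1 : ((D k)ᴴ * D l).trace
        = ((D k)ᴴ * ESet (Sk l) A).trace - ((D k)ᴴ * ESet (Sk (l+1)) A).trace := by
      show ((D k)ᴴ * (f l - f (l+1))).trace = _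
      rw [Matrix.mul_sub, Matrix.trace_sub]
    rw [e1, e2 l hkl, e2 (l+1) (lt_trans hkl (Nat.lt_succ_self l)), sub_zero]
  have hpyth : (Aᴴ * A).trace = ∑ k ∈ Finset.range n, ((D k)ᴴ * D k).trace := by
    conv_lhs => rw [← htele]
    rw [Matrix.conjTranspose_sum, Finset.sum_mul]
    simp only [Finset.mul_sum]
    rw [Matrix.trace_sum]
    apply Finset.sum_congr rfl
    intro k hk
    rw [Matrix.trace_sum]
    apply Finset.sum_eq_single k
    · intro l hl hlk
      rcases lt_or_gt_of_ne hlk with h | h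
      · rw [trace_star, horth l k h, star_zero]
      · exact horth k l h
    · intro hk'
      exact absurd hk hk'
  have hDk : ∀ (k : ℕ) (hk : k < n), D k = ESet (Sk k) (dCoord ⟨k, hk⟩ A) := by
    intro k hk
    have hunion : Sk k ∪ {(⟨k, hk⟩ : Fin n)} = Sk (k+1) := by
      ext i
      simp only [hSk, Finset.mem_union, Finset.mem_filter, Finset.mem_univ, true_and,
        Finset.mem_singleton, Fin.ext_iff]
      omega
    show f k - f (k+1) = _
    rw [dCoord, ESet_sub, ESet_comp, hunion]
  set g : ℕ → ℝ := fun k =>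
    if h : k < n then (((dCoord ⟨k, h⟩ A)ᴴ * (dCoord ⟨k, h⟩ A)).trace).re else 0 with hg
  calc ((Aᴴ * A).trace).re = ∑ k ∈ Finset.range n, (((D k)ᴴ * D k).trace).re := by
        rw [hpyth, Complex.re_sum]
    _ ≤ ∑ k ∈ Finset.range n, g k := by
        apply Finset.sum_le_sum
        intro k hk
        have hkn : k < n := Finset.mem_range.mp hk
        rw [hg]
        simp only [dif_pos hkn]
        rw [hDk k hkn]
        exact ESet_contract _ _
    _ = ∑ j : Fin n, g (j : ℕ) := (Fin.sum_univ_eq_sum_range g n).symm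
    _ = ∑ j : Fin n, (((dCoord j A)ᴴ * (dCoord j A)).trace).re := by
        apply Finset.sum_congr rfl
        intro j _
        rw [hg]
        simp only [dif_pos j.isLt, Fin.eta]

end Aux

/-- Every balanced quantum Boolean function `A ∈ M₂(ℂ)^{⊗n}` (`A = A*`, `A² = 𝟏`,
`tr A = 0`) has total geometric influence `Inf¹(A) = ∑_j ‖d_j A‖₁ ≥ 1/π`. -/
theorem balanced_total_influence (n : ℕ) (hn : 1 ≤ n) (A : Obs n)
    (hherm : Aᴴ = A) (hbool : A * A = 1) (hbal : A.trace = 0) :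
    1 / Real.pi ≤ inf1 A := by
  classical
  -- PSD of 1 ± A
  have h1A : (1 - A).PosSemidef := by
    apply psd_aux
    · rw [Matrix.conjTranspose_sub, Matrix.conjTranspose_one, hherm]
    · have h : (1 - A) * (1 - A) = 1 - A - A + A * A := by noncomm_ring
      rw [h, hbool, two_smul]
      abel
  have h2A : (1 + A).PosSemidef := by
    apply psd_aux
    · rw [Matrix.conjTranspose_add, Matrix.conjTranspose_one, hherm]
    · have h : (1 + A) * (1 + A) = 1 + A + A + A * A := by noncomm_ring
      rw [h, hbool, two_smul]
      abel
  -- the derivatives are Hermitian with spectrum in [-2,2]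
  have hXherm : ∀ j : Fin n, (dCoord j A)ᴴ = dCoord j A := by
    intro j
    rw [dCoord, Matrix.conjTranspose_sub, ESet_conjTranspose, hherm]
  have hpsd1 : ∀ j : Fin n, (((2:ℝ):ℂ) • 1 - dCoord j A).PosSemidef := by
    intro j
    have e : ((2:ℝ):ℂ) • (1 : Obs n) - dCoord j A = (1 - A) + ESet {j} (1 + A) := by
      rw [ESet_add, ESet_one, dCoord]
      push_cast
      rw [two_smul]
      abel
    rw [e]
    exact h1A.add (ESet_posSemidef j h2A)
  have hpsd2 : ∀ j : Fin n, (((2:ℝ):ℂ) • 1 + dCoord j A).PosSemidef := by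
    intro j
    have e : ((2:ℝ):ℂ) • (1 : Obs n) + dCoord j A = (1 + A) + ESet {j} (1 - A) := by
      rw [ESet_sub, ESet_one, dCoord]
      push_cast
      rw [two_smul]
      abel
    rw [e]
    exact h2A.add (ESet_posSemidef j h1A)
  have key1 : ∀ j : Fin n, (((dCoord j A)ᴴ * dCoord j A).trace).re
      ≤ 2 * ((psdSqrt ((dCoord j A)ᴴ * dCoord j A)).trace).re := fun j =>
    trace_sq_le 2 (dCoord j A) (hXherm j) (hpsd1 j) (hpsd2 j)
  have key2 := sum_dCoord_ge A hbal
  have hAA : ((Aᴴ * A).trace).re = (2:ℝ)^n := by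
    rw [hherm, hbool, Matrix.trace_one, card_QState, Complex.natCast_re]
    push_cast
    ring
  have hlow : (2:ℝ)^n ≤ 2 * ∑ j : Fin n,
      ((psdSqrt ((dCoord j A)ᴴ * dCoord j A)).trace).re := by
    rw [Finset.mul_sum]
    calc (2:ℝ)^n = ((Aᴴ * A).trace).re := hAA.symm
      _ ≤ ∑ j : Fin n, (((dCoord j A)ᴴ * (dCoord j A)).trace).re := key2
      _ ≤ ∑ j : Fin n, 2 * ((psdSqrt ((dCoord j A)ᴴ * dCoord j A)).trace).re :=
          Finset.sum_le_sum fun j _ => key1 j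
  have hcard : ((Fintype.card (QState n)) : ℝ) = (2:ℝ)^n := by
    rw [card_QState]
    push_cast
    ring
  have hinf : inf1 A = (∑ j : Fin n,
      ((psdSqrt ((dCoord j A)ᴴ * dCoord j A)).trace).re) / (2:ℝ)^n := by
    unfold inf1 normOne
    rw [hcard, ← Finset.sum_div]
  rw [hinf]
  have hpi2 : (1:ℝ)/Real.pi ≤ 1/2 := by
    have h3 := Real.pi_gt_three
    rw [div_le_div_iff₀ Real.pi_pos (by norm_num : (0:ℝ) < 2)]
    linarith
  refine le_trans hpi2 ?_
  rw [div_le_div_iff₀ (by norm_num : (0:ℝ) < 2) (by positivity : (0:ℝ) < (2:ℝ)^n)]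
  linarith [hlow]

end QPaper
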